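/- arXiv:1212.5749 — 4 statements merged into one kernel-verified Lean document; each statement's English description precedes it below -/
import Mathlib

section
/- Let (G, τ) be a paratopological group and let α be an infinite cardinal. Then (G, τ_α) is a paratopological group, where τ_α is the P_α-modification of τ, i.e., the coarsest topology containing τ in which every intersection of fewer than α open sets is open. -/
/-! Multiplication `μ` is continuous for `τ_α` iff the final topology of `μ : τ_α × τ_α → G` is
finer than `τ_α`. Since `τ_α` is the coarsest `P_α`-topology finer than `τ`, it suffices that this
final topology is a `P_α`-topology finer than `τ`. It is finer than `τ` because `μ` is continuous
for `τ` and `τ_α` is finer than `τ`, and it is a `P_α`-topology because products and final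
topologies of `P_α`-spaces are `P_α`. -/

/-- A topology `t` on `X` is a `P_α`-topology if every intersection of fewer than `α`
open sets is open. -/
def IsPAlpha {X : Type*} (α : Cardinal) (t : TopologicalSpace X) : Prop :=
  ∀ C : Set (Set X), (∀ U ∈ C, t.IsOpen U) → Cardinal.mk C < α → t.IsOpen (⋂₀ C)

/-- The `P_α`-modification of a topology: the coarsest `P_α`-topology containing it
(i.e. the intersection of all `P_α`-topologies finer than `t`). -/
def pAlphaModification {X : Type*} (α : Cardinal) (t : TopologicalSpace X) :
    TopologicalSpace X :=
  sSup {s : TopologicalSpace X | s ≤ t ∧ IsPAlpha α s}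

open Set Topology

universe u

namespace IsPAlpha

variable {X Y : Type u} {α : Cardinal.{u}}

theorem isOpen_iInter {t : TopologicalSpace X} (h : IsPAlpha α t) {ι : Type u}
    {f : ι → Set X} (hf : ∀ i, IsOpen[t] (f i)) (hι : Cardinal.mk ι < α) :
    IsOpen[t] (⋂ i, f i) := by
  rw [← sInter_range]
  exact h _ (forall_mem_range.2 hf) (Cardinal.mk_range_le.trans_lt hι)

theorem sSup {S : Set (TopologicalSpace X)} (hS : ∀ s ∈ S, IsPAlpha α s) :
    IsPAlpha α (sSup S) := fun C hC hCα =>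
  isOpen_sSup_iff.2 fun s hs => hS s hs C (fun U hU => isOpen_sSup_iff.1 (hC U hU) s hs) hCα

theorem coinduced {t : TopologicalSpace X} (h : IsPAlpha α t) (f : X → Y) :
    IsPAlpha α (t.coinduced f) := by
  intro C hC hCα
  change IsOpen[t] (f ⁻¹' ⋂₀ C)
  rw [preimage_sInter, biInter_eq_iInter]
  exact h.isOpen_iInter (fun U => hC U U.2) hCα

theorem prod {s : TopologicalSpace X} {t : TopologicalSpace Y} (hs : IsPAlpha α s)
    (ht : IsPAlpha α t) : IsPAlpha α (instTopologicalSpaceProd (t₁ := s) (t₂ := t)) := by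
  intro C hC hCα
  change IsOpen (⋂₀ C)
  rw [isOpen_prod_iff]
  intro a b hab
  have hbox : ∀ W : C, ∃ U V, IsOpen[s] U ∧ IsOpen[t] V ∧ a ∈ U ∧ b ∈ V ∧
      U ×ˢ V ⊆ (W : Set (X × Y)) := fun W => isOpen_prod_iff.1 (hC W W.2) a b (hab W W.2)
  choose U V hU hV haU hbV hUV using hbox
  refine ⟨⋂ W, U W, ⋂ W, V W, hs.isOpen_iInter hU hCα, ht.isOpen_iInter hV hCα,
    mem_iInter.2 haU, mem_iInter.2 hbV, fun p hp W hW => ?_⟩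
  exact hUV ⟨W, hW⟩ ⟨mem_iInter.1 hp.1 ⟨W, hW⟩, mem_iInter.1 hp.2 ⟨W, hW⟩⟩

end IsPAlpha

section pAlphaModification

variable {X : Type u} {α : Cardinal.{u}} {t : TopologicalSpace X}

theorem pAlphaModification_le : pAlphaModification α t ≤ t :=
  sSup_le fun _ hs => hs.1

theorem isPAlpha_pAlphaModification : IsPAlpha α (pAlphaModification α t) :=
  IsPAlpha.sSup fun _ hs => hs.2

theorem le_pAlphaModification {s : TopologicalSpace X} (hst : s ≤ t) (hs : IsPAlpha α s) :
    s ≤ pAlphaModification α t :=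
  le_sSup ⟨hst, hs⟩

end pAlphaModification

theorem continuousMul_pAlphaModification {M : Type u} [Mul M] {t : TopologicalSpace M}
    (ht : @ContinuousMul M t _) (α : Cardinal.{u}) :
    @ContinuousMul M (pAlphaModification α t) _ := by
  have hs : IsPAlpha α (pAlphaModification α t) := isPAlpha_pAlphaModification
  have hst : pAlphaModification α t ≤ t := pAlphaModification_le
  refine @ContinuousMul.mk M (pAlphaModification α t) _ ?_
  rw [continuous_iff_coinduced_le]
  refine le_pAlphaModification ?_ ((hs.prod hs).coinduced _)
  exact (coinduced_mono (TopologicalSpace.prod_mono hst hst)).trans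
    (continuous_iff_coinduced_le.1 ht.continuous_mul)

theorem stmt_3_general {G : Type*} [Group G] (t : TopologicalSpace G)
    (ht : @ContinuousMul G t _) (α : Cardinal) :
    @ContinuousMul G (pAlphaModification α t) _ :=
  continuousMul_pAlphaModification ht α

theorem stmt_3 {G : Type*} [Group G] (t : TopologicalSpace G)
    (ht : @ContinuousMul G t _) (α : Cardinal) (hα : Cardinal.aleph0 ≤ α) :
    @ContinuousMul G (pAlphaModification α t) _ :=
  stmt_3_general t ht α
end

section
/- Let X be a T₀ topological space and let x₁, ..., xₙ be n distinct points of X. Then there exists a continuous map μ : X → Rₙ, where Rₙ = {1, ..., n} carries the topology whose open sets are the initial segments {1, ..., i} for 0 ≤ i ≤ n, such that μ is injective on {x₁, ..., xₙ}. -/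
/-!
Record each point `z` by the set `A z` of indices `i` with `x i ⤳ z`. Near `z` the set `A` can
only shrink, since `z` has a neighbourhood avoiding every closure `closure {x i}` it avoids; hence
`z ↦ φ (A z)` has open sublevel sets for every monotone `φ`. By T₀, `A` separates the points
`x i`. The colex order is a linear order on finsets extending inclusion, and ranking the `n`
colex values `A (x i)` maps this order monotonically into `{1, …, n}`, injectively on those values.
-/

open Finset Filter Topology

section SpecializingIndices

variable {X ι : Type*} [TopologicalSpace X] [Fintype ι] (x : ι → X)

open Classical in
noncomputable def specializingIndices (z : X) : Finset ι := {i | x i ⤳ z}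

theorem mem_specializingIndices {z : X} {i : ι} : i ∈ specializingIndices x z ↔ x i ⤳ z := by
  classical
  simp [specializingIndices]

theorem eventually_specializingIndices_subset (z : X) :
    ∀ᶠ w in 𝓝 z, specializingIndices x w ⊆ specializingIndices x z := by
  have h : ∀ i, ∀ᶠ w in 𝓝 z, x i ⤳ w → x i ⤳ z := fun i ↦ by
    by_cases hi : x i ⤳ z
    · exact .of_forall fun _ _ ↦ hi
    · rw [specializes_iff_mem_closure] at hi
      filter_upwards [isClosed_closure.isOpen_compl.mem_nhds hi] with w hw hiw
      exact absurd (specializes_iff_mem_closure.1 hiw) hw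
  filter_upwards [eventually_all.2 h] with w hw i hi
  exact (mem_specializingIndices x).2 (hw i ((mem_specializingIndices x).1 hi))

theorem isOpen_specializingIndices_preimage {L : Set (Finset ι)} (hL : IsLowerSet L) :
    IsOpen (specializingIndices x ⁻¹' L) :=
  isOpen_iff_mem_nhds.2 fun z hz ↦
    (eventually_specializingIndices_subset x z).mono fun _ hw ↦ hL hw hz

theorem injOn_specializingIndices [T0Space X] : Set.InjOn (specializingIndices x) (Set.range x) := by
  rintro _ ⟨i, rfl⟩ _ ⟨j, rfl⟩ h
  have hi : i ∈ specializingIndices x (x i) := (mem_specializingIndices x).2 specializes_rfl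
  have hj : j ∈ specializingIndices x (x j) := (mem_specializingIndices x).2 specializes_rfl
  have hij : x i ⤳ x j := (mem_specializingIndices x).1 (h ▸ hi)
  have hji : x j ⤳ x i := (mem_specializingIndices x).1 (h ▸ hj)
  exact (hij.antisymm hji).eq

end SpecializingIndices

section Rank

variable {β : Type*} [LinearOrder β] (s : Finset β)

def rankIn (v : β) : ℕ := #{w ∈ s | w ≤ v}

theorem monotone_rankIn : Monotone (rankIn s) := fun _ _ hvw ↦
  card_le_card (monotone_filter_right s fun _ _ hu ↦ hu.trans hvw)

theorem rankIn_le_card (v : β) : rankIn s v ≤ #s := card_filter_le _ _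

theorem one_le_rankIn {v : β} (hv : v ∈ s) : 1 ≤ rankIn s v :=
  card_pos.2 ⟨v, mem_filter.2 ⟨hv, le_rfl⟩⟩

theorem strictMonoOn_rankIn : StrictMonoOn (rankIn s) s := fun v _ w hw hvw ↦ by
  refine card_lt_card (ssubset_of_subset_of_ne
    (monotone_filter_right s fun _ _ hu ↦ hu.trans hvw.le) fun h ↦ ?_)
  have hw' : w ∈ {u ∈ s | u ≤ v} := h ▸ mem_filter.2 ⟨hw, le_rfl⟩
  exact hvw.not_ge (mem_filter.1 hw').2

end Rank

theorem stmt_13_general {X : Type*} [TopologicalSpace X] [T0Space X] (n : ℕ) (hn : 1 ≤ n)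
    (x : Fin n → X)
    (t : TopologicalSpace {k : ℕ // 1 ≤ k ∧ k ≤ n})
    (ht : ∀ V : Set {k : ℕ // 1 ≤ k ∧ k ≤ n},
      t.IsOpen V ↔ ∃ i ≤ n, V = {y | y.1 ≤ i}) :
    ∃ μ : X → {k : ℕ // 1 ≤ k ∧ k ≤ n},
      @Continuous X _ _ t μ ∧ Set.InjOn μ (Set.range x) := by
  set s := univ.image fun i ↦ toColex (specializingIndices x (x i))
  set φ : Finset (Fin n) → ℕ := fun A ↦ max 1 (rankIn s (toColex A))
  have hφ : Monotone φ := fun _ _ h ↦ max_le_max le_rfl (monotone_rankIn s (Colex.toColex_mono h))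
  have hφn (A) : φ A ≤ n :=
    max_le hn ((rankIn_le_card s _).trans (card_image_le.trans (card_fin n).le))
  refine ⟨fun z ↦ ⟨φ (specializingIndices x z), le_max_left _ _, hφn _⟩, ?_, ?_⟩
  · refine @continuous_def X _ _ t _ |>.2 fun V hV ↦ ?_
    obtain ⟨i, -, rfl⟩ := (ht V).1 hV
    exact isOpen_specializingIndices_preimage x ((isLowerSet_Iic i).preimage hφ)
  · rintro _ ⟨i, rfl⟩ _ ⟨j, rfl⟩ h
    have hs (k) : toColex (specializingIndices x (x k)) ∈ s := mem_image_of_mem _ (mem_univ k)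
    have hrank := congrArg Subtype.val h
    simp only [φ, max_eq_right (one_le_rankIn s (hs _))] at hrank
    exact injOn_specializingIndices x ⟨i, rfl⟩ ⟨j, rfl⟩
      (toColex_inj.1 ((strictMonoOn_rankIn s).injOn (hs i) (hs j) hrank))

theorem stmt_13 {X : Type*} [TopologicalSpace X] [T0Space X] (n : ℕ) (hn : 1 ≤ n)
    (x : Fin n → X) (hx : Function.Injective x)
    (t : TopologicalSpace {k : ℕ // 1 ≤ k ∧ k ≤ n})
    (ht : ∀ V : Set {k : ℕ // 1 ≤ k ∧ k ≤ n},
      t.IsOpen V ↔ ∃ i ≤ n, V = {y | y.1 ≤ i}) :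
    ∃ μ : X → {k : ℕ // 1 ≤ k ∧ k ≤ n},
      @Continuous X _ _ t μ ∧ Set.InjOn μ (Set.range x) :=
  stmt_13_general n hn x t ht
end

section
/- Let X be a set and let φ : FreeGroup X → ℤ be the group homomorphism sending each generator x ∈ X to 1 (the exponent-sum homomorphism). Then the kernel of φ is the normal closure in FreeGroup X of the set { x⁻¹·y : x, y ∈ X }. -/
/-!
Modulo the normal closure `N` of the elements `x⁻¹ y`, all generators become equal, so every word
`w` is congruent to `x₀ ^ φ(w)` for any fixed generator `x₀`. Hence `φ(w) = 0` forces `w ∈ N`;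
the reverse inclusion holds because `φ(x⁻¹ y) = 0`.
-/

namespace FreeGroup

variable {X : Type*}

def exponentSum : FreeGroup X →* Multiplicative ℤ :=
  lift fun _ => Multiplicative.ofAdd 1

@[simp]
lemma exponentSum_of (x : X) : exponentSum (of x) = Multiplicative.ofAdd 1 :=
  lift_apply_of

variable (X) in
def generatorRatios : Set (FreeGroup X) :=
  {w | ∃ x y : X, w = (of x)⁻¹ * of y}

lemma normalClosure_generatorRatios_le_ker :
    Subgroup.normalClosure (generatorRatios X) ≤ exponentSum.ker :=
  Subgroup.normalClosure_le_normal <| by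
    rintro _ ⟨x, y, rfl⟩
    simp [MonoidHom.mem_ker]

lemma mk_eq_mk_of_zpow_exponentSum (x₀ : X) (w : FreeGroup X) :
    (w : FreeGroup X ⧸ Subgroup.normalClosure (generatorRatios X)) =
      (of x₀ : FreeGroup X ⧸ Subgroup.normalClosure (generatorRatios X)) ^
        (exponentSum w).toAdd := by
  induction w using FreeGroup.induction_on with
  | C1 => simp
  | of x =>
    have hx : (of x)⁻¹ * of x₀ ∈ Subgroup.normalClosure (generatorRatios X) :=
      Subgroup.subset_normalClosure ⟨x, x₀, rfl⟩
    simpa [QuotientGroup.eq] using hx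
  | inv_of x ih => simp [ih]
  | mul a b iha ihb => simp [iha, ihb, zpow_add]

lemma ker_exponentSum_le_normalClosure :
    exponentSum.ker ≤ Subgroup.normalClosure (generatorRatios X) := by
  intro w hw
  rcases isEmpty_or_nonempty X with _ | ⟨⟨x₀⟩⟩
  · simp [Subsingleton.elim w 1]
  · rw [← QuotientGroup.eq_one_iff, mk_eq_mk_of_zpow_exponentSum x₀, MonoidHom.mem_ker.mp hw]
    simp

theorem ker_exponentSum :
    exponentSum.ker = Subgroup.normalClosure (generatorRatios X) :=
  ker_exponentSum_le_normalClosure.antisymm normalClosure_generatorRatios_le_ker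

end FreeGroup

theorem stmt_16 (X : Type*) :
    (FreeGroup.lift (fun _ : X => Multiplicative.ofAdd (1 : ℤ))).ker =
      Subgroup.normalClosure
        {w : FreeGroup X | ∃ x y : X, w = (FreeGroup.of x)⁻¹ * FreeGroup.of y} :=
  FreeGroup.ker_exponentSum
end

section
/- Let X be a set, n ≥ 1, and suppose x₁, ..., xₙ, y₁, ..., yₙ ∈ X satisfy yᵢ ≠ xᵢ for all i and Σᵢ (yᵢ - xᵢ) = 0 in the free abelian group on X. Then there exist m with 2 ≤ m ≤ n and distinct indices i₁, ..., i_m ∈ {1, ..., n} such that x_{i₁} = y_{i₂}, x_{i₂} = y_{i₃}, ..., x_{i_{m-1}} = y_{i_m}, and x_{i_m} = y_{i₁}. -/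
/-!
Evaluating the relation at the indicator of a point `a` shows that `x` and `y` take the value `a`
equally often, so there is a permutation `σ` of the indices with `y (σ i) = x i`; since `yᵢ ≠ xᵢ`,
`σ` has no fixed points. Any orbit of `σ` then has length `m ≥ 2` and, listed in order, gives the
required cycle of indices.
-/

open Function

namespace FreeAbelianGroup

variable {ι X : Type*} [Fintype ι] {x y : ι → X}

theorem card_fiber_eq_of_sum_of_sub_eq_zero [DecidableEq X]
    (h : ∑ i, (of (y i) - of (x i)) = 0) (a : X) :
    Fintype.card {i // x i = a} = Fintype.card {i // y i = a} := by
  have hcount := congrArg (lift fun b => if b = a then (1 : ℤ) else 0) h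
  simp only [map_sum, map_sub, lift_apply_of, map_zero, Finset.sum_sub_distrib, sub_eq_zero,
    Finset.sum_boole] at hcount
  rw [Fintype.card_subtype, Fintype.card_subtype]
  exact_mod_cast hcount.symm

theorem exists_perm_apply_eq_of_sum_of_sub_eq_zero
    (h : ∑ i, (of (y i) - of (x i)) = 0) : ∃ σ : Equiv.Perm ι, ∀ i, y (σ i) = x i := by
  classical
  let e a : {i // x i = a} ≃ {i // y i = a} :=
    Fintype.equivOfCardEq (card_fiber_eq_of_sum_of_sub_eq_zero h a)
  exact ⟨Equiv.ofFiberEquiv e, Equiv.ofFiberEquiv_map e⟩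

end FreeAbelianGroup

theorem Function.apply_iterate_eq_iterate_finRotate {α : Type*} (f : α → α) (a : α)
    (k : Fin (minimalPeriod f a)) : f (f^[k] a) = f^[finRotate _ k] a := by
  have := k.neZero
  rw [finRotate_apply, Fin.val_add, Fin.val_one', Nat.add_mod_mod, iterate_mod_minimalPeriod_eq,
    iterate_succ_apply']

theorem Equiv.Perm.exists_cycle_of_apply_ne {ι : Type*} [Fintype ι] (σ : Equiv.Perm ι) {i : ι}
    (hi : σ i ≠ i) :
    ∃ m : ℕ, 2 ≤ m ∧ m ≤ Fintype.card ι ∧ ∃ idx : Fin m → ι, Injective idx ∧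
      ∀ k : Fin m, σ (idx k) = idx (finRotate m k) := by
  set m := minimalPeriod σ i
  have hpos : 0 < m := minimalPeriod_pos_of_mem_periodicPts (σ.injective.mem_periodicPts i)
  have hne_one : m ≠ 1 := fun h => hi (minimalPeriod_eq_one_iff_isFixedPt.mp h)
  let idx : Fin m → ι := fun k => σ^[k] i
  have hidx : Injective idx := fun k l h =>
    Fin.ext (iterate_injOn_Iio_minimalPeriod k.isLt l.isLt h)
  refine ⟨m, by omega, by simpa using Fintype.card_le_of_injective idx hidx, idx, hidx, ?_⟩
  exact apply_iterate_eq_iterate_finRotate σ i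

theorem stmt_17 {X : Type*} (n : ℕ) (hn : 1 ≤ n) (x y : Fin n → X)
    (hne : ∀ i, y i ≠ x i)
    (hsum : ∑ i, (FreeAbelianGroup.of (y i) - FreeAbelianGroup.of (x i)) = 0) :
    ∃ m : ℕ, 2 ≤ m ∧ m ≤ n ∧ ∃ idx : Fin m → Fin n, Function.Injective idx ∧
      ∀ k : Fin m, x (idx k) = y (idx (finRotate m k)) := by
  obtain ⟨σ, hσ⟩ := FreeAbelianGroup.exists_perm_apply_eq_of_sum_of_sub_eq_zero hsum
  have hfree : σ ⟨0, hn⟩ ≠ ⟨0, hn⟩ := fun h => hne _ (by rw [← hσ, h])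
  obtain ⟨m, hm2, hmn, idx, hidx, hcycle⟩ := σ.exists_cycle_of_apply_ne hfree
  refine ⟨m, hm2, by simpa using hmn, idx, hidx, fun k => ?_⟩
  rw [← hσ, hcycle]
end
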